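/- Let k ≥ 1, let A ∈ M_{2^k}(ℂ) have diagonal entries A_{ℓℓ} = d_ℓ for ℓ = 1,…,2^k, and let n ≥ 1. Then the diagonal of A(n) ∈ M_{2^{k+n−1}}(ℂ) is given as follows: for every ℓ with 1 ≤ ℓ ≤ 2^{k−1} and every h with 1 ≤ h ≤ 2^{n−1}, the (2^n(ℓ−1)+2h−1)-th diagonal entry of A(n) equals γ_{ℓ,h−1}^n and the (2^n(ℓ−1)+2h)-th diagonal entry of A(n) equals γ_{ℓ,h}^n, where γ_{ℓ,h}^n = d_{2ℓ−1} + (h/2^{n−1})(d_{2ℓ} − d_{2ℓ−1}). -/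

import Mathlib

/-!
`Wₙ` is block diagonal with copies of `W₁` on consecutive `4 × 4` blocks, and block `p` of
`I₂ ⊗ B` only involves the `2 × 2` block of `B` at rows and columns `2p, 2p + 1`. Conjugating
that block by `W₁` gives the diagonal `(b₀₀, (b₀₀ + b₁₁)/2, (b₀₀ + b₁₁)/2, b₁₁)`: every step of
the recursion keeps the two ends of each pair of diagonal entries and inserts their midpoint
twice. By induction, the diagonal of `A(n)` on the block belonging to `d_{2ℓ-1}, d_{2ℓ}` runs
through the uniform grid of mesh `2^{1-n}` between these two values, interior nodes twice.
-/

open Matrix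
open scoped Kronecker

noncomputable section

/-- Cast a square matrix along an equality of sizes. -/
def mcast {m n : ℕ} (h : m = n) (A : Matrix (Fin m) (Fin m) ℂ) :
    Matrix (Fin n) (Fin n) ℂ :=
  Matrix.reindex (finCongr h) (finCongr h) A

/-- `A ⊗ I₂` in the paper's convention, i.e. the block-diagonal matrix `diag(A, A)`
(used for the recursion `W_{n+1} = Wₙ ⊗ I₂ = diag(Wₙ, Wₙ)`). -/
def blockDup {m : ℕ} (A : Matrix (Fin m) (Fin m) ℂ) :
    Matrix (Fin (2 * m)) (Fin (2 * m)) ℂ :=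
  Matrix.reindex finProdFinEquiv finProdFinEquiv
    ((1 : Matrix (Fin 2) (Fin 2) ℂ) ⊗ₖ A)

/-- `I₂ ⊗ A` in the paper's convention: each entry `a_{ij}` is placed at the (1-based)
positions `(2i−1, 2j−1)` and `(2i, 2j)`.  This is the coherent embedding
`φ(A) = I₂ ⊗ A` of the paper, for which `e_{ij} ↦ e_{2i−1,2j−1} + e_{2i,2j}`. -/
def entryDup {m : ℕ} (A : Matrix (Fin m) (Fin m) ℂ) :
    Matrix (Fin (m * 2)) (Fin (m * 2)) ℂ :=
  Matrix.reindex finProdFinEquiv finProdFinEquiv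
    (A ⊗ₖ (1 : Matrix (Fin 2) (Fin 2) ℂ))

/-- The 4 × 4 matrix `W₁`. -/
def W1 : Matrix (Fin 4) (Fin 4) ℂ :=
  !![1, 0, 0, 0;
     0, (Real.sqrt 2 : ℂ)⁻¹, -(Real.sqrt 2 : ℂ)⁻¹, 0;
     0, (Real.sqrt 2 : ℂ)⁻¹, (Real.sqrt 2 : ℂ)⁻¹, 0;
     0, 0, 0, 1]

/-- The sequence `Wₙ ∈ M_{2^{n+1}}(ℂ)`, with `W_{n+1} = Wₙ ⊗ I₂ = diag(Wₙ, Wₙ)`.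
(The value at `0` is irrelevant; all statements only involve `n ≥ 1`.) -/
def Wmat : (n : ℕ) → Matrix (Fin (2 ^ (n + 1))) (Fin (2 ^ (n + 1))) ℂ
  | 0 => 1
  | 1 => mcast (by norm_num) W1
  | (n + 2) => mcast (by ring) (blockDup (Wmat (n + 1)))

/-- `iterA k A n` is the matrix `A(n+1) ∈ M_{2^{k+n}}(ℂ)` of the paper:
`A(1) = A`, `A(n+1) = W_{k+n-1} (I₂ ⊗ A(n)) W_{k+n-1}^*`. -/
def iterA (k : ℕ) (A : Matrix (Fin (2 ^ k)) (Fin (2 ^ k)) ℂ) :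
    (n : ℕ) → Matrix (Fin (2 ^ (k + n))) (Fin (2 ^ (k + n))) ℂ
  | 0 => A
  | (n + 1) => Wmat (k + n) * mcast (by ring) (entryDup (iterA k A n)) * (Wmat (k + n))ᴴ

/-- Squared Frobenius (Hilbert–Schmidt) norm. -/
def frobSq {m n : ℕ} (A : Matrix (Fin m) (Fin n) ℂ) : ℝ :=
  ∑ i, ∑ j, ‖A i j‖ ^ 2

/-- `diffA k A n = A(n+2) - I₂ ⊗ A(n+1)` in the paper's numbering. -/
def diffA (k : ℕ) (A : Matrix (Fin (2 ^ k)) (Fin (2 ^ k)) ℂ) (n : ℕ) :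
    Matrix (Fin (2 ^ (k + n + 1))) (Fin (2 ^ (k + n + 1))) ℂ :=
  iterA k A (n + 1) - mcast (by ring) (entryDup (iterA k A n))

/-- The diagonal compression `E_{D(m)}`. -/
def diagComp {m : ℕ} (A : Matrix (Fin m) (Fin m) ℂ) : Matrix (Fin m) (Fin m) ℂ :=
  Matrix.diagonal (fun i => A i i)

/-- Index bound: for `1 ≤ l ≤ 2^{k−1}` and `1 ≤ h ≤ 2^{n−1}`,
the 1-based index `2^n(l−1) + 2h` is at most `2^{k+n−1}`. -/
lemma idxBound {k n l h : ℕ} (hk : 1 ≤ k) (hn : 1 ≤ n) (hl1 : 1 ≤ l)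
    (hl2 : l ≤ 2 ^ (k - 1)) (hh2 : h ≤ 2 ^ (n - 1)) :
    2 ^ n * (l - 1) + 2 * h ≤ 2 ^ (k + (n - 1)) := by
  have e1 : 2 * h ≤ 2 ^ n := by
    have e : (2 : ℕ) ^ n = 2 * 2 ^ (n - 1) := by
      rw [← pow_succ']
      congr 1
      omega
    omega
  have e2 : 2 ^ n * l ≤ 2 ^ (k + (n - 1)) := by
    calc 2 ^ n * l ≤ 2 ^ n * 2 ^ (k - 1) := Nat.mul_le_mul_left _ hl2
      _ = 2 ^ (k + (n - 1)) := by rw [← pow_add]; congr 1; omega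
  have e3 : 2 ^ n * (l - 1) + 2 ^ n = 2 ^ n * l := by
    obtain ⟨l', rfl⟩ : ∃ l'', l = l'' + 1 := ⟨l - 1, by omega⟩
    simp [Nat.mul_succ]
  omega

/-- For `1 ≤ k` and `l ≤ 2^{k−1}` one has `2l ≤ 2^k`. -/
lemma twoLBound {k l : ℕ} (hk : 1 ≤ k) (hl2 : l ≤ 2 ^ (k - 1)) : 2 * l ≤ 2 ^ k := by
  calc 2 * l ≤ 2 * 2 ^ (k - 1) := by omega
    _ = 2 ^ k := by rw [← pow_succ']; congr 1; omega

lemma mcast_apply {m n : ℕ} (h : m = n) (A : Matrix (Fin m) (Fin m) ℂ) (i j : Fin n) :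
    mcast h A i j = A ⟨i, h ▸ i.2⟩ ⟨j, h ▸ j.2⟩ := rfl

lemma entryDup_apply {m : ℕ} (A : Matrix (Fin m) (Fin m) ℂ) (x y : Fin (m * 2)) :
    entryDup A x y =
      if (x : ℕ) % 2 = (y : ℕ) % 2 then
        A ⟨(x : ℕ) / 2, by omega⟩ ⟨(y : ℕ) / 2, by omega⟩ else 0 := by
  simp only [entryDup, reindex_apply, submatrix_apply, finProdFinEquiv_symm_apply,
    kroneckerMap_apply, Matrix.one_apply, Fin.ext_iff, Fin.coe_modNat]
  split_ifs
  · rw [mul_one]; rfl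
  · rw [mul_zero]

lemma blockDup_apply {m : ℕ} (A : Matrix (Fin m) (Fin m) ℂ) (x y : Fin (2 * m)) :
    blockDup A x y =
      if (x : ℕ) / m = (y : ℕ) / m then
        A ⟨(x : ℕ) % m, Nat.mod_lt _ (by have := x.2; omega)⟩
          ⟨(y : ℕ) % m, Nat.mod_lt _ (by have := y.2; omega)⟩
      else 0 := by
  simp only [blockDup, reindex_apply, submatrix_apply, finProdFinEquiv_symm_apply,
    kroneckerMap_apply, Matrix.one_apply, Fin.ext_iff, Fin.coe_divNat]
  split_ifs
  · rw [one_mul]; rfl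
  · rw [zero_mul]

lemma Nat.div_eq_div_and_mod_div_eq_iff (x y b c : ℕ) :
    x / (b * c) = y / (b * c) ∧ x % (b * c) / b = y % (b * c) / b ↔ x / b = y / b := by
  rw [← Nat.div_div_eq_div_mul, ← Nat.div_div_eq_div_mul, Nat.mod_mul_right_div_self,
    Nat.mod_mul_right_div_self]
  exact (Nat.ext_div_mod_iff c _ _).symm

lemma Wmat_apply (m : ℕ) (hm : 1 ≤ m) (i j : Fin (2 ^ (m + 1))) :
    Wmat m i j =
      if (i : ℕ) / 4 = (j : ℕ) / 4 then
        W1 ⟨(i : ℕ) % 4, Nat.mod_lt _ (by norm_num)⟩ ⟨(j : ℕ) % 4, Nat.mod_lt _ (by norm_num)⟩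
      else 0 := by
  induction m, hm using Nat.le_induction with
  | base =>
    have hi : (i : ℕ) < 4 := i.2
    have hj : (j : ℕ) < 4 := j.2
    rw [Wmat, mcast_apply, if_pos (by omega)]
    congr 1 <;> ext <;> simp <;> omega
  | succ m hm ih =>
    obtain ⟨m, rfl⟩ := Nat.exists_eq_add_of_le' hm
    have hsize : 2 ^ (m + 1 + 1) = 4 * 2 ^ m := by ring
    rw [Wmat, mcast_apply, blockDup_apply, ih]
    simp only [← ite_and, hsize, Nat.div_eq_div_and_mod_div_eq_iff,
      Nat.mod_mod_of_dvd _ (Dvd.intro _ rfl)]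

lemma Fin.sum_eq_sum_block {M : Type*} [AddCommMonoid M] {N b p : ℕ} (hb : 0 < b)
    (hp : b * p + b ≤ N) (f : Fin N → M) (hf : ∀ i : Fin N, (i : ℕ) / b ≠ p → f i = 0) :
    ∑ i, f i = ∑ a : Fin b, f ⟨b * p + a, by omega⟩ := by
  refine (Fintype.sum_of_injective (fun a : Fin b => (⟨b * p + a, by omega⟩ : Fin N))
    (fun a a' h => Fin.ext (by simpa using h)) _ f
    (fun i hi => hf i fun hip => hi ⟨⟨i % b, ?_⟩, ?_⟩) fun _ => rfl).symm
  · exact Nat.mod_lt _ hb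
  · ext
    simp only [← hip]
    exact Nat.div_add_mod _ _

lemma Matrix.mul_mul_conjTranspose_apply_self {m n α : Type*} [Fintype n] [CommSemiring α]
    [StarRing α] (W : Matrix m n α) (M : Matrix n n α) (d : m) :
    (W * M * Wᴴ) d d = ∑ i, ∑ j, W d i * M i j * star (W d j) := by
  simp only [mul_apply, conjTranspose_apply, Finset.sum_mul]
  exact Finset.sum_comm

lemma W1_mul_entryDup_mul_conjTranspose_apply_self (C : Matrix (Fin 2) (Fin 2) ℂ) (r : Fin 4) :
    (W1 * entryDup C * W1ᴴ) r r =
      ![C 0 0, (C 0 0 + C 1 1) / 2, (C 0 0 + C 1 1) / 2, C 1 1] r := by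
  have hs : (Real.sqrt 2 : ℂ)⁻¹ * (Real.sqrt 2 : ℂ)⁻¹ = 2⁻¹ := by
    rw [← mul_inv, ← Complex.ofReal_mul, Real.mul_self_sqrt zero_le_two, Complex.ofReal_ofNat]
  rw [mul_mul_conjTranspose_apply_self]
  fin_cases r <;> simp [Fin.sum_univ_four, entryDup_apply, W1] <;>
    linear_combination (C 0 0 + C 1 1) * hs

lemma Wmat_apply_block {m : ℕ} (hm : 1 ≤ m) (p : ℕ) (r a : Fin 4)
    (hi : 4 * p + r < 2 ^ (m + 1)) (hj : 4 * p + a < 2 ^ (m + 1)) :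
    Wmat m ⟨4 * p + r, hi⟩ ⟨4 * p + a, hj⟩ = W1 r a := by
  rw [Wmat_apply m hm, if_pos (by dsimp only; omega)]
  congr 1 <;> ext <;> simp

lemma mcast_entryDup_apply_block {m n : ℕ} (h : m * 2 = n) (B : Matrix (Fin m) (Fin m) ℂ)
    {p : ℕ} (hp : 2 * p + 1 < m) (a b : Fin 4) (hi : 4 * p + a < n) (hj : 4 * p + b < n) :
    mcast h (entryDup B) ⟨4 * p + a, hi⟩ ⟨4 * p + b, hj⟩ =
      entryDup (B.submatrix (fun c : Fin 2 => ⟨2 * p + c, by omega⟩)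
        (fun c : Fin 2 => ⟨2 * p + c, by omega⟩)) a b := by
  rw [mcast_apply, entryDup_apply, entryDup_apply]
  dsimp only
  by_cases hab : (a : ℕ) % 2 = b % 2
  · rw [if_pos (by omega), if_pos hab, submatrix_apply]
    congr 1 <;> ext <;> simp <;> omega
  · rw [if_neg (by omega), if_neg hab]

lemma Wmat_mul_entryDup_mul_conjTranspose_apply_block {m : ℕ} (hm : 1 ≤ m)
    (h : 2 ^ m * 2 = 2 ^ (m + 1)) (B : Matrix (Fin (2 ^ m)) (Fin (2 ^ m)) ℂ) {p : ℕ}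
    (hp : 2 * p + 1 < 2 ^ m) (r : Fin 4) (hr : 4 * p + r < 2 ^ (m + 1)) :
    (Wmat m * mcast h (entryDup B) * (Wmat m)ᴴ) ⟨4 * p + r, hr⟩ ⟨4 * p + r, hr⟩ =
      (W1 * entryDup (B.submatrix (fun c : Fin 2 => ⟨2 * p + c, by omega⟩)
        (fun c : Fin 2 => ⟨2 * p + c, by omega⟩)) * W1ᴴ) r r := by
  have hblock : 4 * p + 4 ≤ 2 ^ (m + 1) := by omega
  have hrow : ∀ j : Fin (2 ^ (m + 1)), (j : ℕ) / 4 ≠ p → Wmat m ⟨4 * p + r, hr⟩ j = 0 :=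
    fun j hj => by rw [Wmat_apply m hm, if_neg (by dsimp only; omega)]
  rw [mul_mul_conjTranspose_apply_self, mul_mul_conjTranspose_apply_self,
    Fin.sum_eq_sum_block four_pos hblock _ fun i hi => by simp [hrow i hi]]
  refine Finset.sum_congr rfl fun a _ => ?_
  rw [Fin.sum_eq_sum_block four_pos hblock _ fun j hj => by simp [hrow j hj]]
  refine Finset.sum_congr rfl fun b _ => ?_
  rw [Wmat_apply_block hm, Wmat_apply_block hm, mcast_entryDup_apply_block h _ hp]

/-- The diagonal of `M` indexed by `ℕ` (junk value `0` out of range), so that index arithmetic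
needs no bound proofs. -/
def diagAt {N : ℕ} (M : Matrix (Fin N) (Fin N) ℂ) (i : ℕ) : ℂ :=
  if h : i < N then M ⟨i, h⟩ ⟨i, h⟩ else 0

lemma diagAt_of_lt {N : ℕ} (M : Matrix (Fin N) (Fin N) ℂ) {i : ℕ} (h : i < N) :
    diagAt M i = M ⟨i, h⟩ ⟨i, h⟩ :=
  dif_pos h

lemma diagAt_iterA_succ (k : ℕ) (hk : 1 ≤ k) (A : Matrix (Fin (2 ^ k)) (Fin (2 ^ k)) ℂ)
    (t : ℕ) {p : ℕ} (hp : 2 * p + 1 < 2 ^ (k + t)) (r : Fin 4) :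
    diagAt (iterA k A (t + 1)) (4 * p + r) =
      ![diagAt (iterA k A t) (2 * p),
        (diagAt (iterA k A t) (2 * p) + diagAt (iterA k A t) (2 * p + 1)) / 2,
        (diagAt (iterA k A t) (2 * p) + diagAt (iterA k A t) (2 * p + 1)) / 2,
        diagAt (iterA k A t) (2 * p + 1)] r := by
  have hr : 4 * p + r < 2 ^ (k + (t + 1)) := by rw [← add_assoc, pow_succ]; omega
  rw [diagAt_of_lt _ hr, iterA, Wmat_mul_entryDup_mul_conjTranspose_apply_block (by omega) _ _ hp,
    W1_mul_entryDup_mul_conjTranspose_apply_self, diagAt_of_lt _ (by omega : 2 * p < _),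
    diagAt_of_lt _ hp]
  rfl

theorem diagAt_iterA (k : ℕ) (A : Matrix (Fin (2 ^ k)) (Fin (2 ^ k)) ℂ) {L : ℕ}
    (hL : 2 * L + 1 < 2 ^ k) (t : ℕ) {m : ℕ} (hm : m < 2 ^ (t + 1)) :
    diagAt (iterA k A t) (2 ^ (t + 1) * L + m) =
      diagAt A (2 * L) +
        ((m + 1) / 2 : ℕ) / 2 ^ t * (diagAt A (2 * L + 1) - diagAt A (2 * L)) := by
  induction t generalizing m with
  | zero =>
    interval_cases m <;> simp [iterA]
  | succ t ih =>
    have hk : 1 ≤ k := Nat.pos_of_ne_zero (by rintro rfl; simp at hL)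
    obtain ⟨q, r, rfl⟩ : ∃ (q : ℕ) (r : Fin 4), m = 4 * q + r :=
      ⟨m / 4, ⟨m % 4, Nat.mod_lt _ four_pos⟩, (Nat.div_add_mod m 4).symm⟩
    have hq : 2 * q + 1 < 2 ^ (t + 1) := by rw [pow_succ] at hm ⊢; omega
    have hp : 2 * (2 ^ t * L + q) + 1 < 2 ^ (k + t) :=
      calc 2 * (2 ^ t * L + q) + 1 < 2 ^ t * (2 * L + 2) := by rw [pow_succ] at hq; linarith
        _ ≤ 2 ^ t * 2 ^ k := Nat.mul_le_mul_left _ hL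
        _ = 2 ^ (k + t) := by rw [pow_add, mul_comm]
    rw [show 2 ^ (t + 1 + 1) * L + (4 * q + r) = 4 * (2 ^ t * L + q) + r by ring,
      diagAt_iterA_succ k hk A t hp, show 2 * (2 ^ t * L + q) = 2 ^ (t + 1) * L + 2 * q by ring,
      show 2 ^ (t + 1) * L + 2 * q + 1 = 2 ^ (t + 1) * L + (2 * q + 1) by ring,
      ih (by omega), ih hq, show (2 * q + 1) / 2 = q by omega,
      show (2 * q + 1 + 1) / 2 = q + 1 by omega,
      show (4 * q + r + 1) / 2 = 2 * q + (r + 1) / 2 by omega]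
    fin_cases r <;> dsimp <;> push_cast <;> field_simp <;> ring

/-- `A(n)` is `iterA k A (n - 1)`, and the paper's 1-based index `i` is `i - 1` here. -/
theorem stmt_9 (k : ℕ) (hk : 1 ≤ k) (A : Matrix (Fin (2 ^ k)) (Fin (2 ^ k)) ℂ)
    (n : ℕ) (hn : 1 ≤ n)
    (l : ℕ) (hl1 : 1 ≤ l) (hl2 : l ≤ 2 ^ (k - 1))
    (h : ℕ) (hh1 : 1 ≤ h) (hh2 : h ≤ 2 ^ (n - 1)) :
    iterA k A (n - 1)
        ⟨2 ^ n * (l - 1) + 2 * h - 2, by have := idxBound hk hn hl1 hl2 hh2; omega⟩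
        ⟨2 ^ n * (l - 1) + 2 * h - 2, by have := idxBound hk hn hl1 hl2 hh2; omega⟩ =
      A ⟨2 * l - 2, by have := twoLBound hk hl2; omega⟩
          ⟨2 * l - 2, by have := twoLBound hk hl2; omega⟩ +
        (((h - 1 : ℕ) : ℂ) / 2 ^ (n - 1)) *
          (A ⟨2 * l - 1, by have := twoLBound hk hl2; omega⟩
              ⟨2 * l - 1, by have := twoLBound hk hl2; omega⟩ -
            A ⟨2 * l - 2, by have := twoLBound hk hl2; omega⟩
              ⟨2 * l - 2, by have := twoLBound hk hl2; omega⟩) ∧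
    iterA k A (n - 1)
        ⟨2 ^ n * (l - 1) + 2 * h - 1, by have := idxBound hk hn hl1 hl2 hh2; omega⟩
        ⟨2 ^ n * (l - 1) + 2 * h - 1, by have := idxBound hk hn hl1 hl2 hh2; omega⟩ =
      A ⟨2 * l - 2, by have := twoLBound hk hl2; omega⟩
          ⟨2 * l - 2, by have := twoLBound hk hl2; omega⟩ +
        ((h : ℂ) / 2 ^ (n - 1)) *
          (A ⟨2 * l - 1, by have := twoLBound hk hl2; omega⟩
              ⟨2 * l - 1, by have := twoLBound hk hl2; omega⟩ -
            A ⟨2 * l - 2, by have := twoLBound hk hl2; omega⟩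
              ⟨2 * l - 2, by have := twoLBound hk hl2; omega⟩) := by
  have hL : 2 * (l - 1) + 1 < 2 ^ k := by have := twoLBound hk hl2; omega
  have hn' : n - 1 + 1 = n := Nat.sub_add_cancel hn
  have h2n : 2 * h ≤ 2 ^ n := by rw [← hn', pow_succ]; omega
  have diag (m : ℕ) (hm : m < 2 ^ n) :
      diagAt (iterA k A (n - 1)) (2 ^ n * (l - 1) + m) = diagAt A (2 * l - 2) +
        ((m + 1) / 2 : ℕ) / 2 ^ (n - 1) * (diagAt A (2 * l - 1) - diagAt A (2 * l - 2)) := by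
    have := diagAt_iterA k A hL (n - 1) (m := m) (by rwa [hn'])
    rwa [hn', show 2 * (l - 1) = 2 * l - 2 by omega, show 2 * l - 2 + 1 = 2 * l - 1 by omega]
      at this
  rw [← diagAt_of_lt (iterA k A (n - 1)), ← diagAt_of_lt (iterA k A (n - 1)),
    ← diagAt_of_lt A, ← diagAt_of_lt A,
    show 2 ^ n * (l - 1) + 2 * h - 2 = 2 ^ n * (l - 1) + (2 * h - 2) by omega,
    show 2 ^ n * (l - 1) + 2 * h - 1 = 2 ^ n * (l - 1) + (2 * h - 1) by omega,
    diag _ (by omega), diag _ (by omega),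
    show (2 * h - 2 + 1) / 2 = h - 1 by omega, show (2 * h - 1 + 1) / 2 = h by omega]
  exact ⟨rfl, rfl⟩
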